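/- arXiv:0804.1697 — 3 statements merged into one kernel-verified Lean document; each statement's English description precedes it below -/
import Mathlib

section
/- Let C ⊆ {0,1}^m be a linear code (closed under addition mod 2). Fix integers r, w ≥ 0 with r + w ≤ m. Let A(w) = |{c ∈ C : wt(c) ≤ w}| be the number of codewords of Hamming weight at most w. Then |∪_{c∈C} B(c, r)| ≤ (1/A(w)) · Σ_{c∈C} |B(c, r+w)|. -/
/-!
Translating by a codeword `c'` maps the `A(w)` codewords of weight at most `w` injectively into
codewords `c` with `d(c, c') ≤ w`, so every point within distance `r` of `c'` lies in at least
`A(w)` of the balls `B(c, r + w)`, `c ∈ C`. Double counting the incidences between points of the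
union and these balls gives `A(w) · |⋃ B(c', r)| ≤ Σ_c |B(c, r + w)|`.
-/

open Finset

theorem Finset.card_mul_le_sum_card {ι α : Type*} [DecidableEq α] {I : Finset ι}
    {f : ι → Finset α} {s : Finset α} {n : ℕ} (h : ∀ a ∈ s, n ≤ #{i ∈ I | a ∈ f i}) :
    #s * n ≤ ∑ i ∈ I, #(f i) :=
  calc #s * n ≤ ∑ a ∈ s, #(I.bipartiteAbove (fun a i => a ∈ f i) a) := by
        rw [← smul_eq_mul]; exact s.card_nsmul_le_sum _ _ h
    _ = ∑ i ∈ I, #(s.bipartiteBelow (fun a i => a ∈ f i) i) :=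
        sum_card_bipartiteAbove_eq_sum_card_bipartiteBelow _
    _ ≤ ∑ i ∈ I, #(f i) := sum_le_sum fun i _ => card_le_card fun a ha => (mem_filter.1 ha).2

section Hamming

variable {ι : Type*} [Fintype ι] {β : ι → Type*} [∀ i, DecidableEq (β i)] [∀ i, AddGroup (β i)]

theorem hammingDist_self_add_left (x z : ∀ i, β i) : hammingDist (x + z) x = hammingNorm z := by
  have h := hammingDist_comp (fun i => (x i + ·)) (x := z) (y := 0)
    fun i => add_right_injective (x i)
  simp only [Pi.zero_apply, add_zero, hammingDist_zero_right] at h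
  exact h

theorem card_filter_hammingNorm_le_le_card_filter_hammingDist_le {C : Finset (∀ i, β i)}
    (hadd : ∀ x ∈ C, ∀ y ∈ C, x + y ∈ C) {c' y : ∀ i, β i} {r : ℕ} (hc' : c' ∈ C)
    (hy : hammingDist c' y ≤ r) (w : ℕ) :
    #{c ∈ C | hammingNorm c ≤ w} ≤ #{c ∈ C | hammingDist c y ≤ r + w} := by
  refine card_le_card_of_injOn (c' + ·) (fun z hz => ?_) fun a _ b _ h => add_left_cancel h
  rw [coe_filter] at hz
  rw [mem_coe, mem_filter]
  refine ⟨hadd c' hc' z hz.1, ?_⟩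
  calc hammingDist (c' + z) y ≤ hammingDist (c' + z) c' + hammingDist c' y :=
        hammingDist_triangle _ _ _
    _ ≤ w + r := by rw [hammingDist_self_add_left]; exact add_le_add hz.2 hy
    _ = r + w := add_comm _ _

end Hamming

theorem stmt_1_general (m r w : ℕ) (C : Finset (Fin m → ZMod 2))
    (h0 : (0 : Fin m → ZMod 2) ∈ C)
    (hadd : ∀ x ∈ C, ∀ y ∈ C, x + y ∈ C)
    (A : ℕ) (hA : A = (C.filter fun c => hammingNorm c ≤ w).card) :
    ((C.biUnion fun c =>
        Finset.univ.filter fun y => hammingDist c y ≤ r).card : ℝ)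
      ≤ (1 / A) * ∑ c ∈ C,
          ((Finset.univ.filter fun y => hammingDist c y ≤ r + w).card : ℝ) := by
  have hA_pos : (0 : ℝ) < A := by
    rw [hA, Nat.cast_pos, card_pos]
    exact ⟨0, mem_filter.2 ⟨h0, by simp⟩⟩
  have hcount : #(C.biUnion fun c => univ.filter fun y => hammingDist c y ≤ r) * A
      ≤ ∑ c ∈ C, #(univ.filter fun y => hammingDist c y ≤ r + w) := by
    refine card_mul_le_sum_card fun y hy => ?_
    obtain ⟨c', hc', hy⟩ := mem_biUnion.1 hy
    simp only [mem_filter, mem_univ, true_and] at hy ⊢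
    exact hA ▸ card_filter_hammingNorm_le_le_card_filter_hammingDist_le hadd hc' hy w
  rw [one_div, inv_mul_eq_div, le_div_iff₀ hA_pos]
  exact_mod_cast hcount

/-- For a linear code `C ⊆ {0,1}^m` and `r + w ≤ m`, with
`A(w)` the number of codewords of weight at most `w`, the size of the union of
radius-`r` balls around codewords is at most `(1/A(w)) Σ_{c∈C} |B(c, r+w)|`. -/
theorem stmt_1 (m r w : ℕ) (hrw : r + w ≤ m) (C : Finset (Fin m → ZMod 2))
    (h0 : (0 : Fin m → ZMod 2) ∈ C)
    (hadd : ∀ x ∈ C, ∀ y ∈ C, x + y ∈ C)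
    (A : ℕ) (hA : A = (C.filter fun c => hammingNorm c ≤ w).card) :
    ((C.biUnion fun c =>
        Finset.univ.filter fun y => hammingDist c y ≤ r).card : ℝ)
      ≤ (1 / A) * ∑ c ∈ C,
          ((Finset.univ.filter fun y => hammingDist c y ≤ r + w).card : ℝ) :=
  stmt_1_general m r w C h0 hadd A hA
end

section
/- Let n, m, ℓ be positive integers and c ∈ (0,1). If n·c^ℓ/(1+c^ℓ) < m/ℓ, then Σ_{w=0}^{⌊m/ℓ⌋} binom(n, w)·c^{ℓw} ≥ (1/(m+1))·(1+c^ℓ)^n. -/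
/-!
Write `x = c ^ ℓ`, `k = ⌊m / ℓ⌋` and `a w = C(n, w) xʷ`, so that `a (w + 1) / a w = (n - w) x / (w + 1)`.
The hypothesis reads `n x / (1 + x) < m / ℓ < k + 1`, which puts the mode of `a` at most at `k + 1`:
each of the `n - k` terms past `k` is at most `a (k + 1) = a k (n - k) x / (k + 1)`, so the tail is
at most `a k (n - k)² x / (k + 1)`. This is at most `m a k`, because `(n - k)² ≤ (k + 1)(ℓ n - m)`
(from `n ≤ m < ℓ (k + 1)`) while the hypothesis is `x (ℓ n - m) < m`. Hence
`(1 + x)ⁿ ≤ (m + 1) ∑_{w ≤ k} a w`.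
-/

open Finset

lemma one_add_pow_eq_sum_choose_mul_pow {R : Type*} [CommSemiring R] (n : ℕ) (x : R) :
    (1 + x) ^ n = ∑ w ∈ range (n + 1), n.choose w * x ^ w := by
  rw [add_comm, add_pow]
  exact sum_congr rfl fun w _ => by ring

lemma choose_succ_mul_pow_succ_mul {R : Type*} [CommRing R] (n w : ℕ) (x : R) :
    n.choose (w + 1) * x ^ (w + 1) * (w + 1) = n.choose w * x ^ w * ((n - w : ℕ) * x) := by
  have h := congrArg (Nat.cast (R := R)) (Nat.choose_succ_right_eq n w)
  push_cast at h
  linear_combination x ^ (w + 1) * h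

section OrderedField

variable {K : Type*} [Field K] [LinearOrder K] [IsStrictOrderedRing K] {x : K} {n k : ℕ}

lemma one_add_pow_le_sum_range_choose_mul_pow (hx : 0 ≤ x) (hnk : n ≤ k) :
    (1 + x) ^ n ≤ ∑ w ∈ range (k + 1), (n.choose w : K) * x ^ w := by
  rw [one_add_pow_eq_sum_choose_mul_pow]
  exact sum_le_sum_of_subset_of_nonneg (range_subset_range.2 (by omega))
    fun w _ _ ↦ by positivity

lemma antitoneOn_choose_mul_pow (hx : 0 ≤ x) (hmode : n * x ≤ (k + 1) * (1 + x)) :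
    AntitoneOn (fun w ↦ n.choose w * x ^ w) {w | k + 1 ≤ w} := by
  refine antitoneOn_nat_Ici_of_succ_le fun w hw ↦ ?_
  have hw' : (k : K) + 1 ≤ w := by exact_mod_cast hw
  have hratio : ((n - w : ℕ) : K) * x ≤ w + 1 := by
    rcases le_total w n with hwn | hnw
    · rw [Nat.cast_sub hwn]
      nlinarith
    · rw [Nat.sub_eq_zero_of_le hnw, Nat.cast_zero, zero_mul]
      positivity
  have hpos : (0 : K) < w + 1 := by positivity
  refine le_of_mul_le_mul_right ?_ hpos
  rw [choose_succ_mul_pow_succ_mul]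
  exact mul_le_mul_of_nonneg_left hratio (by positivity)

lemma sum_Ico_choose_mul_pow_le (hx : 0 ≤ x) (hmode : n * x ≤ (k + 1) * (1 + x)) :
    ∑ w ∈ Ico (k + 1) (n + 1), (n.choose w : K) * x ^ w
      ≤ (n - k : ℕ) * (n.choose (k + 1) * x ^ (k + 1)) := by
  have h := sum_le_card_nsmul (Ico (k + 1) (n + 1)) (fun w ↦ (n.choose w : K) * x ^ w) _
    fun w hw ↦ antitoneOn_choose_mul_pow hx hmode (le_refl (k + 1)) (mem_Ico.1 hw).1
      (mem_Ico.1 hw).1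
  simpa only [Nat.card_Ico, Nat.add_sub_add_right, nsmul_eq_mul] using h

theorem one_add_pow_le_mul_sum_range_choose_mul_pow {M : K} (hx : 0 ≤ x) (hkn : k < n)
    (hmode : n * x ≤ (k + 1) * (1 + x)) (hM : ((n : K) - k) ^ 2 * x ≤ M * (k + 1)) :
    (1 + x) ^ n ≤ (M + 1) * ∑ w ∈ range (k + 1), (n.choose w : K) * x ^ w := by
  set T := ∑ w ∈ range (k + 1), (n.choose w : K) * x ^ w
  have hpos : (0 : K) < k + 1 := by positivity
  have hM0 : 0 ≤ M := nonneg_of_mul_nonneg_left ((by positivity : (0 : K) ≤ _).trans hM) hpos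
  have hkT : (n.choose k : K) * x ^ k ≤ T :=
    single_le_sum (f := fun w ↦ (n.choose w : K) * x ^ w) (fun w _ ↦ by positivity)
      (self_mem_range_succ k)
  have htail : (∑ w ∈ Ico (k + 1) (n + 1), (n.choose w : K) * x ^ w) * (k + 1)
      ≤ M * (n.choose k * x ^ k) * (k + 1) :=
    calc _ ≤ (n - k : ℕ) * (n.choose (k + 1) * x ^ (k + 1)) * (k + 1) :=
          mul_le_mul_of_nonneg_right (sum_Ico_choose_mul_pow_le hx hmode) hpos.le
      _ = ((n : K) - k) ^ 2 * x * (n.choose k * x ^ k) := by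
          rw [mul_assoc, choose_succ_mul_pow_succ_mul, Nat.cast_sub hkn.le]; ring
      _ ≤ M * (k + 1) * (n.choose k * x ^ k) := mul_le_mul_of_nonneg_right hM (by positivity)
      _ = M * (n.choose k * x ^ k) * (k + 1) := by ring
  rw [one_add_pow_eq_sum_choose_mul_pow, ← sum_range_add_sum_Ico _ (by omega : k + 1 ≤ n + 1)]
  nlinarith [le_of_mul_le_mul_right htail hpos, mul_le_mul_of_nonneg_left hkT hM0]

end OrderedField

lemma sq_sub_le_mul_sub {n m k ℓ : ℕ} (hnm : n ≤ m) (hkn : k < n) (hmℓ : m < ℓ * (k + 1)) :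
    ((n : ℤ) - k) ^ 2 ≤ (k + 1) * (ℓ * n - m) := by
  have hmℓ' : (m : ℤ) + 1 ≤ ℓ * (k + 1) := by exact_mod_cast hmℓ
  have hnm' : (n : ℤ) ≤ m := by exact_mod_cast hnm
  have hkn' : (k : ℤ) + 1 ≤ n := by exact_mod_cast hkn
  nlinarith [mul_le_mul_of_nonneg_right hmℓ' (Int.natCast_nonneg n),
    mul_nonneg (sub_nonneg.2 hnm') (sub_nonneg.2 hkn'), Int.natCast_nonneg k]

theorem stmt_5_general (n m ℓ : ℕ) (hℓ : 0 < ℓ)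
    (hnm : n ≤ m) (c : ℝ) (hc : c ∈ Set.Ioo (0 : ℝ) 1)
    (h : (n : ℝ) * c ^ ℓ / (1 + c ^ ℓ) < (m : ℝ) / ℓ) :
    (1 / ((m : ℝ) + 1)) * (1 + c ^ ℓ) ^ n
      ≤ ∑ w ∈ Finset.range (m / ℓ + 1), (n.choose w : ℝ) * c ^ (ℓ * w) := by
  simp_rw [pow_mul]
  set x := c ^ ℓ
  set k := m / ℓ
  have hx : 0 ≤ x := pow_nonneg hc.1.le ℓ
  have hℓ' : (0 : ℝ) < ℓ := by exact_mod_cast hℓ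
  have hmk : m < ℓ * (k + 1) := Nat.lt_mul_div_succ m hℓ
  have hmk' : (m : ℝ) < ℓ * (k + 1) := by exact_mod_cast hmk
  have hxm : x * (ℓ * n - m) < m := by
    rw [div_lt_div_iff₀ (by positivity) hℓ'] at h
    linarith
  rw [one_div_mul_eq_div, div_le_iff₀' (by positivity)]
  rcases le_or_gt n k with hnk | hkn
  · exact (one_add_pow_le_sum_range_choose_mul_pow hx hnk).trans
      (le_mul_of_one_le_left (sum_nonneg fun w _ ↦ by positivity) (by linarith))
  · refine one_add_pow_le_mul_sum_range_choose_mul_pow hx hkn ?_ ?_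
    · nlinarith
    · have hsq : ((n : ℝ) - k) ^ 2 ≤ (k + 1) * (ℓ * n - m) := by
        exact_mod_cast sq_sub_le_mul_sub hnm hkn hmk
      nlinarith

/-- Lower bound on a truncated binomial sum: if
`n·c^ℓ/(1+c^ℓ) < m/ℓ` (with `n = mR ≤ m`, `c ∈ (0,1)`), then
`Σ_{w=0}^{⌊m/ℓ⌋} C(n,w)·c^{ℓw} ≥ (1/(m+1))·(1+c^ℓ)^n`. -/
theorem stmt_5 (n m ℓ : ℕ) (hn : 0 < n) (hm : 0 < m) (hℓ : 0 < ℓ)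
    (hnm : n ≤ m) (c : ℝ) (hc : c ∈ Set.Ioo (0 : ℝ) 1)
    (h : (n : ℝ) * c ^ ℓ / (1 + c ^ ℓ) < (m : ℝ) / ℓ) :
    (1 / ((m : ℝ) + 1)) * (1 + c ^ ℓ) ^ n
      ≤ ∑ w ∈ Finset.range (m / ℓ + 1), (n.choose w : ℝ) * c ^ (ℓ * w) :=
  stmt_5_general n m ℓ hℓ hnm c hc h
end

section
/- Fix integers n, m, ℓ ≥ 1 and reals R = n/m, D ∈ (0,1/2), D' ∈ [D, 1/2) with c = D'/(1−D'). Let G be an n×m binary matrix with rows of weight ≤ ℓ, C = {uG : u}, and let S = WG + Z be the test-channel output (W uniform, Z iid Bernoulli(D')). Then for every s within Hamming distance Dm of some codeword ŝ ∈ C: P(S = s) ≥ 2^{-n}·(1−D')^m·c^{Dm}·Σ_{w=0}^{⌊m/ℓ⌋} binom(n, w)·c^{ℓw}. -/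
/-!
With `c = D'/(1-D')`, given `W = u` the noise must be `Z = s - uG`, which has probability
`(1-D')^m c^{d(s,uG)}`; so `P(S = s) = 2^{-n}(1-D')^m ∑_u c^{d(s,uG)}`. Recentring the sum at
a codeword `u₀G` within distance `Dm` of `s`, the triangle inequality and `wt(vG) ≤ ℓ wt(v)`
give `d(s,(u₀+v)G) ≤ Dm + ℓ wt(v)`, and since `c ≤ 1` each term is at least
`c^{Dm} c^{ℓ wt(v)}`. Grouping the messages `v` by weight yields `∑_w C(n,w) c^{ℓw}`, of which
the theorem keeps only the terms `w ≤ m/ℓ`.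
-/

open Finset Matrix

section Hamming

variable {ι κ : Type*} [Fintype ι] [Fintype κ]

theorem hammingNorm_vecMul_le {R : Type*} [NonUnitalNonAssocSemiring R] [DecidableEq R]
    (G : Matrix ι κ R) {ℓ : ℕ} (hG : ∀ i, hammingNorm (G i) ≤ ℓ) (u : ι → R) :
    hammingNorm (u ᵥ* G) ≤ ℓ * hammingNorm u := by
  classical
  have hsupp : ({j | (u ᵥ* G) j ≠ 0} : Finset κ) ⊆ ({i | u i ≠ 0} : Finset ι).biUnion
      fun i => {j | G i j ≠ 0} := by
    intro j hj
    obtain ⟨i, -, hi⟩ := exists_ne_zero_of_sum_ne_zero (mem_filter.1 hj).2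
    simp only [mem_biUnion, mem_filter, mem_univ, true_and]
    exact ⟨i, left_ne_zero_of_mul hi, right_ne_zero_of_mul hi⟩
  rw [mul_comm]
  exact (card_le_card hsupp).trans (card_biUnion_le_card_mul _ _ _ fun i _ => hG i)

theorem hammingDist_vecMul_add_le {R : Type*} [Ring R] [DecidableEq R]
    (G : Matrix ι κ R) {ℓ : ℕ} (hG : ∀ i, hammingNorm (G i) ≤ ℓ) (s : κ → R) (u v : ι → R) :
    hammingDist s ((u + v) ᵥ* G) ≤ hammingDist s (u ᵥ* G) + ℓ * hammingNorm v := by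
  calc hammingDist s ((u + v) ᵥ* G)
      ≤ hammingDist s (u ᵥ* G) + hammingDist (u ᵥ* G) ((u + v) ᵥ* G) :=
        hammingDist_triangle _ _ _
    _ ≤ hammingDist s (u ᵥ* G) + ℓ * hammingNorm v := by
        rw [hammingDist_eq_hammingNorm (u ᵥ* G), add_vecMul, neg_add_cancel_left]
        exact Nat.add_le_add_left (hammingNorm_vecMul_le G hG v) _

theorem ZMod.two_eq_one_iff_ne_zero {a : ZMod 2} : a = 1 ↔ a ≠ 0 := by
  revert a; decide

theorem ZMod.two_eq_of_ne_zero_iff {a b : ZMod 2} (h : a ≠ 0 ↔ b ≠ 0) : a = b := by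
  revert a b; decide

theorem sum_hammingNorm_zmod_two [DecidableEq ι] {M : Type*} [AddCommMonoid M] (f : ℕ → M) :
    ∑ v : ι → ZMod 2, f (hammingNorm v) =
      ∑ w ∈ range (Fintype.card ι + 1), (Fintype.card ι).choose w • f w := by
  classical
  have hsupp : Function.Bijective fun v : ι → ZMod 2 => ({i | v i ≠ 0} : Finset ι) := by
    refine ⟨fun v v' h => funext fun i => ZMod.two_eq_of_ne_zero_iff ?_, fun T => ?_⟩
    · simpa using congrArg (i ∈ ·) h
    · exact ⟨fun i => if i ∈ T then 1 else 0, by ext i; by_cases hi : i ∈ T <;> simp [hi]⟩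
  rw [Fintype.sum_bijective _ hsupp (fun v => f (hammingNorm v)) (fun T => f #T) fun v => rfl,
    ← card_univ, ← sum_powerset_apply_card, powerset_univ]

end Hamming

theorem sum_range_choose_mul_le_sum_hammingNorm (n k : ℕ) {f : ℕ → ℝ} (hf : ∀ w, 0 ≤ f w) :
    ∑ w ∈ range k, (n.choose w : ℝ) * f w ≤ ∑ v : Fin n → ZMod 2, f (hammingNorm v) := by
  have hvanish : ∀ w ∈ range k, w ∉ range k ∩ range (n + 1) → (n.choose w : ℝ) * f w = 0 :=
    fun w hwk hw => by
      simp only [mem_inter, mem_range] at hwk hw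
      rw [Nat.choose_eq_zero_of_lt (by omega), Nat.cast_zero, zero_mul]
  rw [sum_hammingNorm_zmod_two, Fintype.card_fin, ← sum_subset inter_subset_left hvanish]
  simp_rw [nsmul_eq_mul]
  exact sum_le_sum_of_subset_of_nonneg inter_subset_right fun w _ _ =>
    mul_nonneg (Nat.cast_nonneg _) (hf w)

section TestChannel

variable {κ : Type*} [Fintype κ]

theorem prod_bernoulli_eq (p : ℝ) (hp : p ≠ 1) (z : κ → ZMod 2) :
    ∏ j, (if z j = 1 then p else 1 - p) =
      (1 - p) ^ Fintype.card κ * (p / (1 - p)) ^ hammingNorm z := by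
  classical
  have hp' : 1 - p ≠ 0 := sub_ne_zero.2 hp.symm
  have hfactor : ∀ j, (if z j ≠ 0 then p else 1 - p) =
      (1 - p) * if z j ≠ 0 then p / (1 - p) else 1 := fun j => by
    split_ifs <;> field_simp
  simp_rw [ZMod.two_eq_one_iff_ne_zero]
  rw [prod_congr rfl fun j _ => hfactor j, prod_mul_distrib, prod_const, ← prod_filter,
    prod_const, card_univ]
  rfl

theorem sum_bernoulli_mul_ite_add_eq [DecidableEq κ] (p : ℝ) (hp : p ≠ 1) (x s : κ → ZMod 2) :
    ∑ z : κ → ZMod 2, (∏ j, if z j = 1 then p else 1 - p) * (if x + z = s then 1 else 0) =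
      (1 - p) ^ Fintype.card κ * (p / (1 - p)) ^ hammingDist s x := by
  classical
  simp_rw [mul_ite, mul_one, mul_zero, ← eq_sub_iff_add_eq', sum_ite_eq', mem_univ, if_true]
  rw [prod_bernoulli_eq p hp, hammingDist_comm, hammingDist_eq_hammingNorm, neg_add_eq_sub]

end TestChannel

theorem pow_mul_sum_le_sum_pow_hammingDist {ι κ R : Type*} [Fintype ι] [DecidableEq ι]
    [Fintype κ] [Ring R] [Fintype R] [DecidableEq R] {c : ℝ} (hc0 : 0 < c) (hc1 : c ≤ 1)
    (G : Matrix ι κ R) {ℓ : ℕ} (hG : ∀ i, hammingNorm (G i) ≤ ℓ) (s : κ → R) (u₀ : ι → R)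
    {r : ℝ} (hr : hammingDist s (u₀ ᵥ* G) ≤ r) :
    c ^ r * ∑ v : ι → R, c ^ (ℓ * hammingNorm v) ≤ ∑ u : ι → R, c ^ hammingDist s (u ᵥ* G) := by
  rw [mul_sum, ← Equiv.sum_comp (Equiv.addLeft u₀) fun u => c ^ hammingDist s (u ᵥ* G)]
  gcongr with v
  calc c ^ r * c ^ (ℓ * hammingNorm v)
      ≤ c ^ hammingDist s (u₀ ᵥ* G) * c ^ (ℓ * hammingNorm v) := by
        gcongr
        rw [← Real.rpow_natCast]
        exact Real.rpow_le_rpow_of_exponent_ge hc0 hc1 hr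
    _ = c ^ (hammingDist s (u₀ ᵥ* G) + ℓ * hammingNorm v) := (pow_add _ _ _).symm
    _ ≤ c ^ hammingDist s ((u₀ + v) ᵥ* G) :=
        pow_le_pow_of_le_one hc0.le hc1 (hammingDist_vecMul_add_le G hG s u₀ v)

theorem stmt_19_general (n m ℓ : ℕ)
    (D D' : ℝ) (hD : D ∈ Set.Ioo (0 : ℝ) (1 / 2))
    (hD' : D' ∈ Set.Ico D (1 / 2)) (c : ℝ) (hc : c = D' / (1 - D'))
    (G : Fin n → Fin m → ZMod 2) (hG : ∀ i, hammingNorm (G i) ≤ ℓ)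
    (s : Fin m → ZMod 2)
    (hs : ∃ u₀ : Fin n → ZMod 2,
        (hammingDist s (fun j => ∑ i, u₀ i * G i j) : ℝ) ≤ D * m)
    (P : ℝ)
    (hP : P = ∑ u : Fin n → ZMod 2, ∑ z : Fin m → ZMod 2,
        ((2 : ℝ) ^ n)⁻¹ * (∏ j, if z j = 1 then D' else 1 - D') *
          (if (fun j => (∑ i, u i * G i j) + z j) = s then 1 else 0)) :
    ((2 : ℝ) ^ n)⁻¹ * (1 - D') ^ m * c ^ (D * m) *
        ∑ w ∈ Finset.range (m / ℓ + 1), (n.choose w : ℝ) * c ^ (ℓ * w)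
      ≤ P := by
  obtain ⟨u₀, hu₀⟩ := hs
  have hD'1 : 0 < 1 - D' := by linarith [hD'.2]
  have hc0 : 0 < c := hc ▸ div_pos (hD.1.trans_le hD'.1) hD'1
  have hc1 : c ≤ 1 := hc ▸ (div_le_one hD'1).2 (by linarith [hD'.2])
  have hP' : P = ((2 : ℝ) ^ n)⁻¹ * (1 - D') ^ m * ∑ u, c ^ hammingDist s (u ᵥ* G) := by
    have hchannel : ∀ u : Fin n → ZMod 2, ∑ z : Fin m → ZMod 2,
        (∏ j, if z j = 1 then D' else 1 - D') * (if u ᵥ* G + z = s then 1 else 0) =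
          (1 - D') ^ m * c ^ hammingDist s (u ᵥ* G) := fun u => by
      rw [sum_bernoulli_mul_ite_add_eq D' (sub_pos.1 hD'1).ne, Fintype.card_fin, hc]
    simp_rw [hP, mul_assoc, ← mul_sum]
    exact congrArg _ ((sum_congr rfl fun u _ => hchannel u).trans (mul_sum _ _ _).symm)
  rw [hP', mul_assoc]
  gcongr
  calc c ^ (D * m) * ∑ w ∈ range (m / ℓ + 1), (n.choose w : ℝ) * c ^ (ℓ * w)
      ≤ c ^ (D * m) * ∑ v : Fin n → ZMod 2, c ^ (ℓ * hammingNorm v) := by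
        gcongr
        exact sum_range_choose_mul_le_sum_hammingNorm n _ fun w => by positivity
    _ ≤ _ := pow_mul_sum_le_sum_pow_hammingDist hc0 hc1 G hG s u₀ hu₀

/-- Central pointwise bound of the test-channel argument. For an
LDGM code with generator rows of weight at most `ℓ`, `c = D'/(1−D')` with
`D ≤ D' < 1/2`, and the test-channel output `S = WG + Z` (`W` uniform on
`{0,1}^n`, `Z` iid Bernoulli(`D'`)): for every source word `s` within Hamming
distance `Dm` of some codeword,
`P(S = s) ≥ 2^{-n}·(1−D')^m·c^{Dm}·Σ_{w=0}^{⌊m/ℓ⌋} C(n,w)·c^{ℓw}`. -/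
theorem stmt_19 (n m ℓ : ℕ) (hn : 0 < n) (hm : 0 < m) (hℓ : 0 < ℓ)
    (R : ℝ) (hR : R = (n : ℝ) / m)
    (D D' : ℝ) (hD : D ∈ Set.Ioo (0 : ℝ) (1 / 2))
    (hD' : D' ∈ Set.Ico D (1 / 2)) (c : ℝ) (hc : c = D' / (1 - D'))
    (G : Fin n → Fin m → ZMod 2) (hG : ∀ i, hammingNorm (G i) ≤ ℓ)
    (s : Fin m → ZMod 2)
    (hs : ∃ u₀ : Fin n → ZMod 2,
        (hammingDist s (fun j => ∑ i, u₀ i * G i j) : ℝ) ≤ D * m)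
    (P : ℝ)
    (hP : P = ∑ u : Fin n → ZMod 2, ∑ z : Fin m → ZMod 2,
        ((2 : ℝ) ^ n)⁻¹ * (∏ j, if z j = 1 then D' else 1 - D') *
          (if (fun j => (∑ i, u i * G i j) + z j) = s then 1 else 0)) :
    ((2 : ℝ) ^ n)⁻¹ * (1 - D') ^ m * c ^ (D * m) *
        ∑ w ∈ Finset.range (m / ℓ + 1), (n.choose w : ℝ) * c ^ (ℓ * w)
      ≤ P :=
  stmt_19_general n m ℓ D D' hD hD' c hc G hG s hs P hP
end
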